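/- Let AF = ⟨𝒜, ⇀⟩ be an argumentation framework, let agents 1,…,n have most preferred labelings ℒ₁,…,ℒₙ, let 𝒮 be any set of admissible labelings each of which is compatible (≈) with every ℒᵢ, and let ℒ ∈ 𝒮. Then: (a) ℒ is Pareto optimal in 𝒮 when every agent i has the Issue-wise set based preference ⪰_{i,⊖_W} if and only if ℒ is Pareto optimal in 𝒮 when every agent i has the IUO Issue-wise sets based preference ⪰_{i,⊖_Wᴹ}; and (b) ℒ is Pareto optimal in 𝒮 when every agent i has the Issue-wise distance based preference ⪰_{i,|⊖_W|} if and only if ℒ is Pareto optimal in 𝒮 when every agent i has the IUO Issue-wise distance based preference ⪰_{i,|⊖_Wᴹ|}. -/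
import Mathlib


/- Labels for arguments: in, out, undec -/
inductive Lab where
  | IN : Lab
  | OUT : Lab
  | UNDEC : Lab
deriving DecidableEq

variable {A : Type}

/-- Arguments labeled `in` by a labeling. -/
def labIn (L : A → Lab) : Set A := {a | L a = Lab.IN}
/-- Arguments labeled `out` by a labeling. -/
def labOut (L : A → Lab) : Set A := {a | L a = Lab.OUT}
/-- Arguments labeled `undec` by a labeling. -/
def labUndec (L : A → Lab) : Set A := {a | L a = Lab.UNDEC}
/-- Decided arguments: labeled `in` or `out`. -/
def labDec (L : A → Lab) : Set A := labIn L ∪ labOut L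

/-- Admissible labeling with respect to a defeat relation `df` (`df b a` : b defeats a). -/
def Admissible (df : A → A → Prop) (L : A → Lab) : Prop :=
  ∀ a : A,
    (L a = Lab.IN → ∀ b : A, df b a → L b = Lab.OUT) ∧
    (L a = Lab.OUT → ∃ b : A, df b a ∧ L b = Lab.IN)

/-- Complete labeling. -/
def Complete (df : A → A → Prop) (L : A → Lab) : Prop :=
  Admissible df L ∧
  ∀ a : A, L a = Lab.UNDEC →
    ¬ (∀ b : A, df b a → L b = Lab.OUT) ∧ ¬ (∃ b : A, df b a ∧ L b = Lab.IN)

/-- `L1 ⊑ L2` : less or equally committed. -/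
def LabLeq (L1 L2 : A → Lab) : Prop := labIn L1 ⊆ labIn L2 ∧ labOut L1 ⊆ labOut L2

/-- `L1 ≈ L2` : compatible labelings. -/
def LabCompatible (L1 L2 : A → Lab) : Prop :=
  labIn L1 ∩ labOut L2 = ∅ ∧ labOut L1 ∩ labIn L2 = ∅

/-- Hamming set `L1 ⊖ L2`. -/
def hamSet (L1 L2 : A → Lab) : Set A := {a | L1 a ≠ L2 a}
/-- Hamming distance `L1 |⊖| L2`. -/
noncomputable def hamDist (L1 L2 : A → Lab) : ℕ := (hamSet L1 L2).ncard

/-- in–out Hamming set `L1 ⊖ⁱᵒ L2`. -/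
def ioSet (L1 L2 : A → Lab) : Set A :=
  {a | (L1 a = Lab.IN ∧ L2 a = Lab.OUT) ∨ (L1 a = Lab.OUT ∧ L2 a = Lab.IN)}
/-- dec–undec Hamming set `L1 ⊖ᵈᵘ L2`. -/
def duSet (L1 L2 : A → Lab) : Set A :=
  {a | (a ∈ labDec L1 ∧ L2 a = Lab.UNDEC) ∨ (L1 a = Lab.UNDEC ∧ a ∈ labDec L2)}
/-- IUO Hamming sets `L1 ⊖ᴹ L2` as a pair. -/
def iuoSets (L1 L2 : A → Lab) : Set A × Set A := (ioSet L1 L2, duSet L1 L2)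
/-- Componentwise inclusion on pairs of sets. -/
def PairSub {α : Type} (p q : Set α × Set α) : Prop := p.1 ⊆ q.1 ∧ p.2 ⊆ q.2
/-- IUO Hamming distance `L1 |⊖ᴹ| L2`. -/
noncomputable def iuoDist (L1 L2 : A → Lab) : ℕ :=
  2 * (ioSet L1 L2).ncard + (duSet L1 L2).ncard

/-- Two arguments are in-sync (with respect to the complete labelings of the framework). -/
def InSync (df : A → A → Prop) (a b : A) : Prop :=
  (∀ L : A → Lab, Complete df L → L a = L b) ∨
  (∀ L : A → Lab, Complete df L →
    (L a = Lab.IN ↔ L b = Lab.OUT) ∧ (L a = Lab.OUT ↔ L b = Lab.IN))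

/-- An issue: an equivalence class of the in-sync relation. -/
def IsIssue (df : A → A → Prop) (B : Set A) : Prop :=
  ∃ a : A, B = {b | InSync df a b}

/-- Issue-wise set `L1 ⊖_W L2`. -/
def iwSet (df : A → A → Prop) (L1 L2 : A → Lab) : Set (Set A) :=
  {B | IsIssue df B ∧ ∃ a ∈ B, L1 a ≠ L2 a}
/-- Issue-wise distance `L1 |⊖_W| L2`. -/
noncomputable def iwDist (df : A → A → Prop) (L1 L2 : A → Lab) : ℕ := (iwSet df L1 L2).ncard

/-- in–out Issue-wise set `L1 ⊖_Wⁱᵒ L2`. -/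
def iwIoSet (df : A → A → Prop) (L1 L2 : A → Lab) : Set (Set A) :=
  {B | IsIssue df B ∧ ∃ a ∈ B, a ∈ ioSet L1 L2}
/-- dec–undec Issue-wise set `L1 ⊖_Wᵈᵘ L2`. -/
def iwDuSet (df : A → A → Prop) (L1 L2 : A → Lab) : Set (Set A) :=
  {B | IsIssue df B ∧ ∃ a ∈ B, a ∈ duSet L1 L2}
/-- IUO Issue-wise sets `L1 ⊖_Wᴹ L2` as a pair. -/
def iwIuoSets (df : A → A → Prop) (L1 L2 : A → Lab) : Set (Set A) × Set (Set A) :=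
  (iwIoSet df L1 L2, iwDuSet df L1 L2)
/-- IUO Issue-wise distance `L1 |⊖_Wᴹ| L2`. -/
noncomputable def iwIuoDist (df : A → A → Prop) (L1 L2 : A → Lab) : ℕ :=
  2 * (iwIoSet df L1 L2).ncard + (iwDuSet df L1 L2).ncard

/- Preferences: `pref Li L L'` means `L ⪰ L'` for an agent whose most preferred labeling is `Li`. -/
/-- Hamming set based preference `⪰_{i,⊖}`. -/
def hamSetPref (Li L L' : A → Lab) : Prop := hamSet L Li ⊆ hamSet L' Li
/-- Hamming distance based preference `⪰_{i,|⊖|}`. -/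
def hamDistPref (Li L L' : A → Lab) : Prop := hamDist L Li ≤ hamDist L' Li
/-- IUO Hamming sets based preference `⪰_{i,⊖ᴹ}`. -/
def iuoSetPref (Li L L' : A → Lab) : Prop := PairSub (iuoSets L Li) (iuoSets L' Li)
/-- IUO Hamming distance based preference `⪰_{i,|⊖ᴹ|}`. -/
def iuoDistPref (Li L L' : A → Lab) : Prop := iuoDist L Li ≤ iuoDist L' Li
/-- Issue-wise set based preference `⪰_{i,⊖_W}`. -/
def iwSetPref (df : A → A → Prop) (Li L L' : A → Lab) : Prop := iwSet df L Li ⊆ iwSet df L' Li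
/-- Issue-wise distance based preference `⪰_{i,|⊖_W|}`. -/
def iwDistPref (df : A → A → Prop) (Li L L' : A → Lab) : Prop := iwDist df L Li ≤ iwDist df L' Li
/-- IUO Issue-wise sets based preference `⪰_{i,⊖_Wᴹ}`. -/
def iwIuoSetPref (df : A → A → Prop) (Li L L' : A → Lab) : Prop :=
  PairSub (iwIuoSets df L Li) (iwIuoSets df L' Li)
/-- IUO Issue-wise distance based preference `⪰_{i,|⊖_Wᴹ|}`. -/
def iwIuoDistPref (df : A → A → Prop) (Li L L' : A → Lab) : Prop :=
  iwIuoDist df L Li ≤ iwIuoDist df L' Li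

/-- Strict part of a preference relation. -/
def StrictPref (pref : (A → Lab) → (A → Lab) → Prop) (L L' : A → Lab) : Prop :=
  pref L L' ∧ ¬ pref L' L

/-- `L'` Pareto dominates `L` with respect to the profile of preference relations `pref`. -/
def Dominates {ι : Type} (pref : ι → (A → Lab) → (A → Lab) → Prop) (L' L : A → Lab) : Prop :=
  (∀ i : ι, pref i L' L) ∧ ∃ j : ι, StrictPref (pref j) L' L

/-- `L` is Pareto optimal in `S`: no element of `S` Pareto dominates `L`. -/
def ParetoOptimalIn {ι : Type} (pref : ι → (A → Lab) → (A → Lab) → Prop)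
    (S : Set (A → Lab)) (L : A → Lab) : Prop :=
  ∀ L' ∈ S, ¬ Dominates pref L' L

/-- `LSO` is the skeptical outcome of profile `P`: the greatest admissible labeling below the
profile. -/
def IsSkeptical {n : ℕ} (df : A → A → Prop) (P : Fin n → (A → Lab)) (LSO : A → Lab) : Prop :=
  Admissible df LSO ∧ (∀ i : Fin n, LabLeq LSO (P i)) ∧
  ∀ L : A → Lab, Admissible df L → (∀ i : Fin n, LabLeq L (P i)) → LabLeq L LSO

/-- `LC` is the credulous initial outcome of the profile `P`. -/
def IsCio {n : ℕ} (P : Fin n → (A → Lab)) (LC : A → Lab) : Prop :=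
  ∀ a : A,
    (LC a = Lab.IN ↔ (∃ i : Fin n, P i a = Lab.IN) ∧ ∀ j : Fin n, P j a ≠ Lab.OUT) ∧
    (LC a = Lab.OUT ↔ (∃ i : Fin n, P i a = Lab.OUT) ∧ ∀ j : Fin n, P j a ≠ Lab.IN)

/-- `LCO` is the credulous outcome of `P`: the greatest admissible labeling `⊑ cio(P)`. -/
def IsCredulous {n : ℕ} (df : A → A → Prop) (P : Fin n → (A → Lab)) (LCO : A → Lab) : Prop :=
  ∃ LCIO : A → Lab, IsCio P LCIO ∧ Admissible df LCO ∧ LabLeq LCO LCIO ∧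
    ∀ L : A → Lab, Admissible df L → LabLeq L LCIO → LabLeq L LCO

/-- `LSCO` is the super credulous outcome of `P` given credulous outcome `LCO`:
the least complete labeling above `LCO`. -/
def IsSuperCredulousOf (df : A → A → Prop) (LCO LSCO : A → Lab) : Prop :=
  Complete df LSCO ∧ LabLeq LCO LSCO ∧
    ∀ L : A → Lab, Complete df L → LabLeq LCO L → LabLeq LSCO L

lemma compat_ioSet_empty {L Li : A → Lab} (h : LabCompatible L Li) :
    ioSet L Li = ∅ := by
  obtain ⟨h1, h2⟩ := h
  ext a
  simp only [ioSet, Set.mem_setOf_eq, Set.mem_empty_iff_false, iff_false]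
  rintro (⟨ha, hb⟩ | ⟨ha, hb⟩)
  · exact Set.eq_empty_iff_forall_notMem.mp h1 a ⟨ha, hb⟩
  · exact Set.eq_empty_iff_forall_notMem.mp h2 a ⟨ha, hb⟩

lemma compat_hamSet_eq_duSet {L Li : A → Lab} (h : LabCompatible L Li) :
    hamSet L Li = duSet L Li := by
  obtain ⟨h1, h2⟩ := h
  ext a
  have hx : ¬(L a = Lab.IN ∧ Li a = Lab.OUT) :=
    fun ⟨p, q⟩ => Set.eq_empty_iff_forall_notMem.mp h1 a ⟨p, q⟩
  have hy : ¬(L a = Lab.OUT ∧ Li a = Lab.IN) :=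
    fun ⟨p, q⟩ => Set.eq_empty_iff_forall_notMem.mp h2 a ⟨p, q⟩
  simp only [hamSet, duSet, labDec, labIn, labOut, Set.mem_setOf_eq, Set.mem_union]
  cases hLa : L a <;> cases hLi : Li a <;> simp_all

lemma compat_iwIoSet_empty {df : A → A → Prop} {L Li : A → Lab} (h : LabCompatible L Li) :
    iwIoSet df L Li = ∅ := by
  ext B
  simp only [iwIoSet, Set.mem_setOf_eq, Set.mem_empty_iff_false, iff_false]
  rintro ⟨-, a, -, ha⟩
  rw [compat_ioSet_empty h] at ha
  exact ha

lemma compat_iwSet_eq_iwDuSet {df : A → A → Prop} {L Li : A → Lab} (h : LabCompatible L Li) :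
    iwSet df L Li = iwDuSet df L Li := by
  have hh := compat_hamSet_eq_duSet h
  ext B
  simp only [iwSet, iwDuSet, Set.mem_setOf_eq]
  constructor
  · rintro ⟨hB, a, haB, hne⟩
    have hm : a ∈ hamSet L Li := hne
    rw [hh] at hm
    exact ⟨hB, a, haB, hm⟩
  · rintro ⟨hB, a, haB, hdu⟩
    have hm : a ∈ hamSet L Li := by rw [hh]; exact hdu
    exact ⟨hB, a, haB, hm⟩

lemma compat_iwDist_eq {df : A → A → Prop} {L Li : A → Lab} (h : LabCompatible L Li) :
    iwIuoDist df L Li = iwDist df L Li := by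
  unfold iwIuoDist iwDist
  rw [compat_iwIoSet_empty h, compat_iwSet_eq_iwDuSet h]
  simp

lemma compat_iwSetPref_iff {df : A → A → Prop} {Li L L' : A → Lab}
    (h : LabCompatible L Li) (h' : LabCompatible L' Li) :
    iwSetPref df Li L L' ↔ iwIuoSetPref df Li L L' := by
  unfold iwSetPref iwIuoSetPref PairSub iwIuoSets
  rw [compat_iwSet_eq_iwDuSet h, compat_iwSet_eq_iwDuSet h',
    compat_iwIoSet_empty h, compat_iwIoSet_empty h']
  simp

lemma compat_iwDistPref_iff {df : A → A → Prop} {Li L L' : A → Lab}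
    (h : LabCompatible L Li) (h' : LabCompatible L' Li) :
    iwDistPref df Li L L' ↔ iwIuoDistPref df Li L L' := by
  unfold iwDistPref iwIuoDistPref
  rw [compat_iwDist_eq h, compat_iwDist_eq h']

/-- on a set of admissible labelings compatible with every agent's labeling,
Pareto optimality for Issue-wise set (resp. distance) based preferences coincides with Pareto
optimality for IUO Issue-wise sets (resp. distance) based preferences. -/
theorem paretoOptimal_iw_iff_iuoIw {A : Type} [Fintype A] {n : ℕ}
    (df : A → A → Prop) (Ls : Fin n → (A → Lab))
    (S : Set (A → Lab))
    (hS : ∀ L ∈ S, Admissible df L ∧ ∀ i : Fin n, LabCompatible L (Ls i))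
    (L : A → Lab) (hL : L ∈ S) :
    (ParetoOptimalIn (fun i : Fin n => iwSetPref df (Ls i)) S L ↔
      ParetoOptimalIn (fun i : Fin n => iwIuoSetPref df (Ls i)) S L) ∧
    (ParetoOptimalIn (fun i : Fin n => iwDistPref df (Ls i)) S L ↔
      ParetoOptimalIn (fun i : Fin n => iwIuoDistPref df (Ls i)) S L) := by
  have hcL : ∀ i : Fin n, LabCompatible L (Ls i) := (hS L hL).2
  constructor
  · constructor <;> intro hp L' hL' hdom <;> refine hp L' hL' ?_
    · have hcL' : ∀ i, LabCompatible L' (Ls i) := (hS L' hL').2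
      obtain ⟨h1, j, hj1, hj2⟩ := hdom
      refine ⟨fun i => (compat_iwSetPref_iff (hcL' i) (hcL i)).mpr (h1 i), j,
        (compat_iwSetPref_iff (hcL' j) (hcL j)).mpr hj1,
        fun hc => hj2 ((compat_iwSetPref_iff (hcL j) (hcL' j)).mp hc)⟩
    · have hcL' : ∀ i, LabCompatible L' (Ls i) := (hS L' hL').2
      obtain ⟨h1, j, hj1, hj2⟩ := hdom
      refine ⟨fun i => (compat_iwSetPref_iff (hcL' i) (hcL i)).mp (h1 i), j,
        (compat_iwSetPref_iff (hcL' j) (hcL j)).mp hj1,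
        fun hc => hj2 ((compat_iwSetPref_iff (hcL j) (hcL' j)).mpr hc)⟩
  · constructor <;> intro hp L' hL' hdom <;> refine hp L' hL' ?_
    · have hcL' : ∀ i, LabCompatible L' (Ls i) := (hS L' hL').2
      obtain ⟨h1, j, hj1, hj2⟩ := hdom
      refine ⟨fun i => (compat_iwDistPref_iff (hcL' i) (hcL i)).mpr (h1 i), j,
        (compat_iwDistPref_iff (hcL' j) (hcL j)).mpr hj1,
        fun hc => hj2 ((compat_iwDistPref_iff (hcL j) (hcL' j)).mp hc)⟩
    · have hcL' : ∀ i, LabCompatible L' (Ls i) := (hS L' hL').2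
      obtain ⟨h1, j, hj1, hj2⟩ := hdom
      refine ⟨fun i => (compat_iwDistPref_iff (hcL' i) (hcL i)).mp (h1 i), j,
        (compat_iwDistPref_iff (hcL' j) (hcL j)).mp hj1,
        fun hc => hj2 ((compat_iwDistPref_iff (hcL j) (hcL' j)).mpr hc)⟩
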